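/- arXiv:2403.15086 — 2 statements merged into one kernel-verified Lean document; each statement's English description precedes it below -/
import Mathlib

section
/- For an admissible index $\mathbf{k}=(k_1,\ldots,k_r)$, the derivative of the interpolated multiple zeta value with respect to the interpolation parameter satisfies $\frac{d}{dt}\zeta^t(\mathbf{k}) = \sum_{\sigma(\mathbf{k}')=1} \zeta^t(\mathbf{k}')$, where the sum runs over all indices obtained from $(k_1\square\cdots\square k_r)$ by filling exactly one $\square$ with a plus sign and the rest with commas. -/
open scoped BigOperators
open MeasureTheory

/-- Multiple zeta value for an index given as a list. -/
noncomputable def mzvL (k : List ℕ) : ℝ :=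
  ∑' m : {f : Fin k.length → ℕ+ // StrictMono f},
    ∏ i, (1 : ℝ) / (((m.1 i : ℕ+) : ℕ) : ℝ) ^ (k.get i)

/-- Multiple zeta-star value for an index given as a list. -/
noncomputable def zetaStarL (k : List ℕ) : ℝ :=
  ∑' m : {f : Fin k.length → ℕ+ // Monotone f},
    ∏ i, (1 : ℝ) / (((m.1 i : ℕ+) : ℕ) : ℝ) ^ (k.get i)

/-- Riemann zeta at a natural number argument. -/
noncomputable def rz (s : ℕ) : ℝ := ∑' n : ℕ+, (1 : ℝ) / ((n : ℕ) : ℝ) ^ s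

/-- Multiple polylogarithm (single variable). -/
noncomputable def LiL (k : List ℕ) (z : ℝ) : ℝ :=
  ∑' m : {f : Fin k.length → ℕ+ // StrictMono f},
    z ^ (if h : 0 < k.length then ((m.1 ⟨k.length - 1, Nat.sub_lt h Nat.one_pos⟩ : ℕ+) : ℕ) else 0)
      / ∏ i, (((m.1 i : ℕ+) : ℕ) : ℝ) ^ (k.get i)

/-- Arakawa-Kaneko multiple zeta function. -/
noncomputable def xiL (k : List ℕ) (s : ℝ) : ℝ :=
  (1 / Real.Gamma s) *
    ∫ t in Set.Ioi (0 : ℝ), t ^ (s - 1) / (Real.exp t - 1) * LiL k (1 - Real.exp (-t))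

/-- All indices obtained from `k` by filling each box with a comma or a plus. -/
def fills : List ℕ → List (List ℕ)
  | [] => [[]]
  | [a] => [[a]]
  | a :: b :: rest => ((fills (b :: rest)).map (a :: ·)) ++ fills ((a + b) :: rest)
termination_by l => l.length

/-- Interpolated multiple zeta value (t-MZV). -/
noncomputable def zetaT (t : ℝ) (k : List ℕ) : ℝ :=
  ((fills k).map (fun k' => t ^ (k.length - k'.length) * mzvL k')).sum

/-- t-Arakawa-Kaneko multiple zeta value. -/
noncomputable def xiT (t : ℝ) (k : List ℕ) (s : ℝ) : ℝ :=
  ((fills k).map (fun k' => t ^ (k.length - k'.length) * xiL k' s)).sum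


/-!
Differentiating `t ^ (r - dep k')` produces the factor `r - dep k'`, so the claim is the
counting identity: an index `k'` obtained from `k` by `r - dep k'` plus signs arises from
exactly `r - dep k'` of the indices with a single plus sign, by filling the remaining boxes.
Both sides satisfy the same recursion in the first box, the one that defines `fills`.
-/

namespace Fills

/-- The fillings `k'` of `k` with `σ(k') = 1`. -/
def oneMerges (k : List ℕ) : List (List ℕ) :=
  (fills k).filter (fun k' => k'.length + 1 = k.length)

lemma length_le_of_mem_fills : ∀ {l w : List ℕ}, w ∈ fills l → w.length ≤ l.length
  | [], w, hw | [a], w, hw => by simp_all [fills]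
  | a :: b :: rest, w, hw => by
      rw [fills, List.mem_append, List.mem_map] at hw
      rcases hw with ⟨m, hm, rfl⟩ | hw
      · simpa using length_le_of_mem_fills hm
      · have := length_le_of_mem_fills hw
        simp only [List.length_cons] at this ⊢
        omega
termination_by l => l.length

lemma ne_nil_of_mem_fills : ∀ {l w : List ℕ}, l ≠ [] → w ∈ fills l → w ≠ []
  | [a], w, _, hw => by simp_all [fills]
  | a :: b :: rest, w, _, hw => by
      rw [fills, List.mem_append, List.mem_map] at hw
      rcases hw with ⟨m, _, rfl⟩ | hw
      · exact List.cons_ne_nil _ _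
      · exact ne_nil_of_mem_fills (List.cons_ne_nil _ _) hw
termination_by l => l.length

lemma filter_fills_length_eq : ∀ l : List ℕ,
    (fills l).filter (fun w => w.length = l.length) = [l]
  | [] | [a] => by simp [fills]
  | a :: b :: rest => by
      have hshort : (fills ((a + b) :: rest)).filter
          (fun w => w.length = (a :: b :: rest).length) = [] := by
        refine List.filter_eq_nil_iff.mpr fun w hw => ?_
        have := length_le_of_mem_fills hw
        simp only [List.length_cons, decide_eq_true_eq] at this ⊢
        omega
      rw [fills, List.filter_append, hshort, List.filter_map, List.append_nil]
      simpa [Function.comp_def] using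
        congrArg (List.map (a :: ·)) (filter_fills_length_eq (b :: rest))
termination_by l => l.length

@[simp]
lemma oneMerges_nil : oneMerges [] = [] := by simp [oneMerges, fills]

@[simp]
lemma oneMerges_singleton (a : ℕ) : oneMerges [a] = [] := by simp [oneMerges, fills]

lemma oneMerges_cons_cons (a b : ℕ) (rest : List ℕ) :
    oneMerges (a :: b :: rest) = (oneMerges (b :: rest)).map (a :: ·) ++ [(a + b) :: rest] := by
  have hmerged : (fun w : List ℕ => decide (w.length + 1 = (a :: b :: rest).length))
      = fun w => decide (w.length = ((a + b) :: rest).length) := by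
    funext w; simp
  rw [oneMerges, fills, List.filter_append, List.filter_map, hmerged, filter_fills_length_eq]
  simp [oneMerges, Function.comp_def]

lemma map_modifyHead_oneMerges (a b : ℕ) (rest : List ℕ) :
    (oneMerges (b :: rest)).map (List.modifyHead (a + ·)) = oneMerges ((a + b) :: rest) := by
  cases rest with
  | nil => simp
  | cons d rest => simp [oneMerges_cons_cons, Function.comp_def, Nat.add_assoc]

variable {M : Type*} [AddCommMonoid M]

lemma sum_fills_cons_cons (c : List ℕ → M) (a b : ℕ) (rest : List ℕ) :
    ((fills (a :: b :: rest)).map c).sum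
      = ((fills (b :: rest)).map (fun w => c (a :: w))).sum
        + ((fills ((a + b) :: rest)).map c).sum := by
  rw [fills, List.map_append, List.sum_append, List.map_map]
  rfl

lemma sum_fills_cons (c : List ℕ → M) (a : ℕ) {m : List ℕ} (hm : m ≠ []) :
    ((fills (a :: m)).map c).sum
      = ((fills m).map (fun w => c (a :: w))).sum
        + ((fills (m.modifyHead (a + ·))).map c).sum := by
  obtain ⟨b, rest, rfl⟩ := List.exists_cons_of_ne_nil hm
  exact sum_fills_cons_cons c a b rest

lemma sum_oneMerges_cons_cons (c : List ℕ → M) (a b : ℕ) (rest : List ℕ) :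
    ((oneMerges (a :: b :: rest)).map (fun m => ((fills m).map c).sum)).sum
      = ((oneMerges (b :: rest)).map (fun m => ((fills m).map (fun w => c (a :: w))).sum)).sum
        + ((oneMerges ((a + b) :: rest)).map (fun m => ((fills m).map c).sum)).sum
        + ((fills ((a + b) :: rest)).map c).sum := by
  have hsplit : ∀ m ∈ oneMerges (b :: rest), ((fills (a :: m)).map c).sum
      = ((fills m).map (fun w => c (a :: w))).sum
        + ((fills (m.modifyHead (a + ·))).map c).sum := fun m hm =>
    sum_fills_cons c a (ne_nil_of_mem_fills (List.cons_ne_nil _ _) (List.mem_filter.mp hm).1)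
  rw [oneMerges_cons_cons, List.map_append, List.sum_append, List.map_map,
    List.map_congr_left (by simpa using hsplit), List.sum_map_add, ← map_modifyHead_oneMerges a b,
    List.map_map]
  simp [Function.comp_def]

lemma sum_fills_nsmul_cons_cons (c : List ℕ → M) (a b : ℕ) (rest : List ℕ) :
    ((fills (a :: b :: rest)).map
        (fun w => ((a :: b :: rest).length - w.length) • c w)).sum
      = ((fills (b :: rest)).map
          (fun w => ((b :: rest).length - w.length) • c (a :: w))).sum
        + ((fills ((a + b) :: rest)).map
          (fun w => (((a + b) :: rest).length - w.length) • c w)).sum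
        + ((fills ((a + b) :: rest)).map c).sum := by
  have hmerged : ∀ w ∈ fills ((a + b) :: rest), ((a :: b :: rest).length - w.length) • c w
      = (((a + b) :: rest).length - w.length) • c w + c w := fun w hw => by
    have := length_le_of_mem_fills hw
    simp only [List.length_cons] at this ⊢
    rw [show rest.length + 1 + 1 - w.length = rest.length + 1 - w.length + 1 by omega, succ_nsmul]
  rw [sum_fills_cons_cons, List.map_congr_left hmerged, List.sum_map_add, add_assoc]
  simp

theorem sum_sum_fills_oneMerges : ∀ (k : List ℕ) (c : List ℕ → M),
    ((oneMerges k).map (fun m => ((fills m).map c).sum)).sum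
      = ((fills k).map (fun w => (k.length - w.length) • c w)).sum
  | [], c | [a], c => by simp [fills]
  | a :: b :: rest, c => by
      rw [sum_oneMerges_cons_cons, sum_fills_nsmul_cons_cons,
        sum_sum_fills_oneMerges (b :: rest), sum_sum_fills_oneMerges ((a + b) :: rest)]
termination_by k => k.length

end Fills

theorem HasDerivAt.list_sum_map {𝕜 F ι : Type*} [NontriviallyNormedField 𝕜]
    [NormedAddCommGroup F] [NormedSpace 𝕜 F] {f : ι → 𝕜 → F} {f' : ι → F} {x : 𝕜}
    (L : List ι) (h : ∀ i ∈ L, HasDerivAt (f i) (f' i) x) :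
    HasDerivAt (fun y => (L.map (fun i => f i y)).sum) (L.map f').sum x := by
  induction L with
  | nil => simpa using hasDerivAt_const x (0 : F)
  | cons i L ih =>
    simpa only [List.map_cons, List.sum_cons] using
      (h i List.mem_cons_self).fun_add (ih fun j hj => h j (List.mem_cons_of_mem _ hj))

open Fills in
theorem stmt13_general (k : List ℕ) (t : ℝ) :
    HasDerivAt (fun s : ℝ => zetaT s k)
      ((((fills k).filter (fun k' => k'.length + 1 = k.length)).map
        (fun k' => zetaT t k')).sum) t := by
  set c : List ℕ → ℝ := fun w => t ^ (k.length - w.length - 1) * mzvL w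
  have hzetaT : ∀ m ∈ oneMerges k, zetaT t m = ((fills m).map c).sum := fun m hm => by
    have hlen : m.length + 1 = k.length := by simpa using (List.mem_filter.mp hm).2
    refine congrArg List.sum (List.map_congr_left fun w _ => ?_)
    simp only [c, show m.length - w.length = k.length - w.length - 1 by omega]
  rw [← oneMerges, List.map_congr_left hzetaT, sum_sum_fills_oneMerges]
  refine HasDerivAt.list_sum_map (fills k) fun w _ => ?_
  simpa [c, nsmul_eq_mul, mul_assoc] using
    (hasDerivAt_pow (k.length - w.length) t).mul_const (mzvL w)

theorem stmt13 (k : List ℕ) (hne : k ≠ []) (hadm : 2 ≤ k.getLast hne) (t : ℝ) :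
    HasDerivAt (fun s : ℝ => zetaT s k)
      ((((fills k).filter (fun k' => k'.length + 1 = k.length)).map
        (fun k' => zetaT t k')).sum) t :=
  stmt13_general k t
end

section
/- For real $t$ and real $x, y$ with $|tx|<1$, $|x|<1$, $|x+y|<1$: $\int_{0<u_1<u_2<1}\left(\frac{1-u_1}{1-u_2}\right)^x\left(\frac{u_2}{u_1}\right)^{tx}\left(\frac{1}{1-u_2}\right)^y\frac{du_1\,du_2}{(1-u_1)u_2} = \sum_{l=1}^{\infty}\frac{\Gamma(l-x)\,\Gamma(1-x-y)}{\Gamma(1-x)\,\Gamma(l+1-x-y)}\cdot\frac{1}{l-tx}$. -/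
open scoped BigOperators
open MeasureTheory

/-!
On the triangle the integrand equals `(1-u₁)^(x-1) u₁^(-tx) · u₂^(tx-1) (1-u₂)^(-x-y)`.
Expanding `(1-u₁)^(-(1-x))` by the binomial series, whose coefficients are
`Γ(1-x+m) / (m! Γ(1-x))`, and integrating termwise, first `u₁` over `(0, u₂)` and then `u₂`
over `(0, 1)` as the Beta integral `B(m+1, 1-x-y)`, gives the term `l = m+1` of the series.
All terms are nonnegative, so the computation is carried out in `ℝ≥0∞` (Tonelli); this also
covers the parameters for which the series diverges, where both sides are the junk value `0`.
-/

open Real Set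
open scoped Nat ENNReal

lemma Real.Gamma_add_nat_div_Gamma_eq {q : ℝ} (hq : ∀ k : ℕ, q ≠ -k) (n : ℕ) :
    Gamma (q + n) / Gamma q = (ascPochhammer ℝ n).eval q := by
  induction n with
  | zero => simp [Gamma_ne_zero hq]
  | succ n ih =>
    have hqn : q + n ≠ 0 := fun h ↦ hq n (eq_neg_of_add_eq_zero_left h)
    rw [ascPochhammer_succ_eval, ← ih, Nat.cast_succ, ← add_assoc, Gamma_add_one hqn]
    ring

noncomputable def negBinomCoeff (q : ℝ) (n : ℕ) : ℝ := Gamma (q + n) / (n ! * Gamma q)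

lemma negBinomCoeff_nonneg {q : ℝ} (hq : 0 < q) (n : ℕ) : 0 ≤ negBinomCoeff q n := by
  have := Gamma_pos_of_pos hq
  have := Gamma_pos_of_pos (by positivity : 0 < q + n)
  unfold negBinomCoeff
  positivity

lemma choose_add_nat_sub_one_eq_negBinomCoeff {q : ℝ} (hq : ∀ k : ℕ, q ≠ -k) (n : ℕ) :
    Ring.choose (q + n - 1) n = negBinomCoeff q n := by
  rw [Ring.choose_eq_smul, Polynomial.descPochhammer_smeval_eq_ascPochhammer,
    Polynomial.ascPochhammer_smeval_eq_eval, show q + n - 1 - n + 1 = q by ring,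
    ← Gamma_add_nat_div_Gamma_eq hq, smul_eq_mul, negBinomCoeff]
  field_simp [Gamma_ne_zero hq]

lemma hasSum_negBinomCoeff_mul_pow {q s : ℝ} (hq : ∀ k : ℕ, q ≠ -k) (hs : |s| < 1) :
    HasSum (fun n : ℕ ↦ negBinomCoeff q n * s ^ n) ((1 - s) ^ (-q)) := by
  have h := (one_div_one_sub_rpow_hasFPowerSeriesOnBall_zero q).hasSum (y := s)
    (by simpa [edist_dist] using hs)
  simp only [FormalMultilinearSeries.ofScalars_apply_eq, zero_add, smul_eq_mul,
    choose_add_nat_sub_one_eq_negBinomCoeff hq] at h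
  rwa [rpow_neg (by linarith [le_abs_self s]), ← one_div]

lemma ofReal_one_sub_rpow_neg {q s : ℝ} (hq : 0 < q) (hs₀ : 0 ≤ s) (hs₁ : s < 1) :
    ENNReal.ofReal ((1 - s) ^ (-q)) = ∑' n : ℕ, ENNReal.ofReal (negBinomCoeff q n * s ^ n) := by
  have hq' : ∀ k : ℕ, q ≠ -k := fun k ↦ ((neg_nonpos.2 k.cast_nonneg).trans_lt hq).ne'
  have h := hasSum_negBinomCoeff_mul_pow hq' (abs_lt.2 ⟨by linarith, hs₁⟩)
  rw [← h.tsum_eq, ENNReal.ofReal_tsum_of_nonneg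
    (fun n ↦ mul_nonneg (negBinomCoeff_nonneg hq n) (by positivity)) h.summable]

lemma lintegral_Ioo_rpow {p c : ℝ} (hp : -1 < p) (hc : 0 < c) :
    ∫⁻ u in Ioo 0 c, ENNReal.ofReal (u ^ p) = ENNReal.ofReal (c ^ (p + 1) / (p + 1)) := by
  have hint : IntegrableOn (fun u : ℝ ↦ u ^ p) (Ioo 0 c) :=
    (intervalIntegrable_iff_integrableOn_Ioo_of_le hc.le).1
      (intervalIntegral.intervalIntegrable_rpow' hp)
  rw [← ofReal_integral_eq_lintegral_ofReal hint
    (ae_restrict_of_forall_mem measurableSet_Ioo fun u hu ↦ rpow_nonneg hu.1.le p),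
    ← integral_Ioc_eq_integral_Ioo, ← intervalIntegral.integral_of_le hc.le,
    integral_rpow (Or.inl hp), zero_rpow (by linarith), sub_zero]

lemma lintegral_Ioo_rpow_mul_one_sub_rpow {α β : ℝ} (hα : 0 < α) (hβ : 0 < β) :
    ∫⁻ u in Ioo 0 1, ENNReal.ofReal (u ^ (α - 1) * (1 - u) ^ (β - 1)) =
      ENNReal.ofReal (Gamma α * Gamma β / Gamma (α + β)) := by
  have h := ProbabilityTheory.lintegral_betaPDF_eq_one hα hβ
  have hB := ProbabilityTheory.beta_pos hα hβ
  rw [ProbabilityTheory.lintegral_betaPDF] at h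
  simp_rw [mul_assoc, ENNReal.ofReal_mul (one_div_pos.2 hB).le] at h
  rw [lintegral_const_mul _ (by fun_prop), ENNReal.ofReal_div_of_pos hB, ENNReal.ofReal_one] at h
  rw [ENNReal.eq_inv_of_mul_eq_one_left ((mul_comm _ _).trans h), one_div, inv_inv,
    ProbabilityTheory.beta]

lemma lintegral_Ioo_one_sub_rpow_neg_mul_rpow_neg {p q b : ℝ} (hp : p < 1) (hq : 0 < q)
    (hb₀ : 0 < b) (hb₁ : b ≤ 1) :
    ∫⁻ a in Ioo 0 b, ENNReal.ofReal ((1 - a) ^ (-q) * a ^ (-p)) =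
      ∑' n : ℕ, ENNReal.ofReal (negBinomCoeff q n / (n + 1 - p) * b ^ (n + 1 - p)) := by
  have hexpand : ∀ a ∈ Ioo 0 b, ENNReal.ofReal ((1 - a) ^ (-q) * a ^ (-p)) =
      ∑' n : ℕ, ENNReal.ofReal (negBinomCoeff q n) * ENNReal.ofReal (a ^ ((n : ℝ) - p)) := by
    intro a ⟨ha₀, hab⟩
    rw [ENNReal.ofReal_mul (rpow_nonneg (by linarith) _),
      ofReal_one_sub_rpow_neg hq ha₀.le (by linarith), ← ENNReal.tsum_mul_right]
    refine tsum_congr fun n ↦ ?_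
    rw [← ENNReal.ofReal_mul (mul_nonneg (negBinomCoeff_nonneg hq n) (by positivity)),
      sub_eq_add_neg, rpow_add ha₀, rpow_natCast, mul_assoc,
      ENNReal.ofReal_mul (negBinomCoeff_nonneg hq n)]
  rw [setLIntegral_congr_fun measurableSet_Ioo hexpand,
    lintegral_tsum fun n ↦ by fun_prop]
  refine tsum_congr fun n ↦ ?_
  have hn : -1 < (n : ℝ) - p := by linarith [n.cast_nonneg (α := ℝ)]
  rw [lintegral_const_mul _ (by fun_prop), lintegral_Ioo_rpow hn hb₀,
    ← ENNReal.ofReal_mul (negBinomCoeff_nonneg hq n)]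
  congr 1
  ring_nf

def triangle : Set (ℝ × ℝ) := {u | 0 < u.1 ∧ u.1 < u.2 ∧ u.2 < 1}

lemma measurableSet_triangle : MeasurableSet triangle :=
  (measurableSet_lt measurable_const measurable_fst).inter
    ((measurableSet_lt measurable_fst measurable_snd).inter
      (measurableSet_lt measurable_snd measurable_const))

lemma lintegral_triangle {F : ℝ × ℝ → ℝ≥0∞} (hF : Measurable F) :
    ∫⁻ u in triangle, F u = ∫⁻ b in Ioo 0 1, ∫⁻ a in Ioo 0 b, F (a, b) := by
  rw [← lintegral_indicator measurableSet_triangle, Measure.volume_eq_prod,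
    lintegral_prod_symm _ (hF.indicator measurableSet_triangle).aemeasurable,
    ← lintegral_indicator measurableSet_Ioo]
  congr 1 with b
  by_cases hb : b ∈ Ioo 0 1
  · rw [indicator_of_mem hb, ← lintegral_indicator measurableSet_Ioo]
    congr 1 with a
    simp only [indicator_apply, triangle, mem_ofPred_eq, mem_Ioo, hb.2, and_true]
  · rw [indicator_of_notMem hb]
    have hzero : ∀ a, triangle.indicator F (a, b) = 0 := fun a ↦
      indicator_of_notMem (s := triangle) (fun h ↦ hb ⟨h.1.trans h.2.1, h.2.2⟩) F
    simp only [hzero, lintegral_zero]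

lemma lintegral_triangle_eq_tsum {p q r : ℝ} (hp : p < 1) (hq : 0 < q) (hr : 0 < r) :
    ∫⁻ u in triangle, ENNReal.ofReal ((1 - u.1) ^ (-q) * u.1 ^ (-p) *
        (u.2 ^ (p - 1) * (1 - u.2) ^ (r - 1))) =
      ∑' n : ℕ, ENNReal.ofReal
        (Gamma (q + n) * Gamma r / (Gamma q * Gamma (n + 1 + r)) / (n + 1 - p)) := by
  have hinner : ∀ b ∈ Ioo (0 : ℝ) 1,
      ∫⁻ a in Ioo 0 b, ENNReal.ofReal ((1 - a) ^ (-q) * a ^ (-p) *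
        (b ^ (p - 1) * (1 - b) ^ (r - 1))) =
      ∑' n : ℕ, ENNReal.ofReal (negBinomCoeff q n / (n + 1 - p)) *
        ENNReal.ofReal (b ^ ((n + 1 : ℝ) - 1) * (1 - b) ^ (r - 1)) := by
    intro b ⟨hb₀, hb₁⟩
    have hK : 0 ≤ b ^ (p - 1) * (1 - b) ^ (r - 1) :=
      mul_nonneg (rpow_nonneg hb₀.le _) (rpow_nonneg (by linarith) _)
    simp_rw [ENNReal.ofReal_mul' hK]
    rw [lintegral_mul_const _ (by fun_prop),
      lintegral_Ioo_one_sub_rpow_neg_mul_rpow_neg hp hq hb₀ hb₁.le, ← ENNReal.tsum_mul_right]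
    refine tsum_congr fun n ↦ ?_
    have hn : 0 < (n : ℝ) + 1 - p := by linarith [n.cast_nonneg (α := ℝ)]
    rw [← ENNReal.ofReal_mul' hK,
      ← ENNReal.ofReal_mul (div_nonneg (negBinomCoeff_nonneg hq n) hn.le),
      show (n : ℝ) + 1 - 1 = (n + 1 - p) + (p - 1) by ring, rpow_add hb₀]
    ring_nf
  rw [lintegral_triangle (by fun_prop), setLIntegral_congr_fun measurableSet_Ioo hinner,
    lintegral_tsum fun n ↦ by fun_prop]
  refine tsum_congr fun n ↦ ?_
  have hn : 0 < (n : ℝ) + 1 - p := by linarith [n.cast_nonneg (α := ℝ)]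
  rw [lintegral_const_mul _ (by fun_prop), lintegral_Ioo_rpow_mul_one_sub_rpow (by positivity) hr,
    ← ENNReal.ofReal_mul (div_nonneg (negBinomCoeff_nonneg hq n) hn.le), negBinomCoeff,
    Gamma_nat_eq_factorial]
  have := Gamma_pos_of_pos hq
  field_simp

lemma integral_triangle_eq_tsum {p q r : ℝ} (hp : p < 1) (hq : 0 < q) (hr : 0 < r) :
    ∫ u in triangle, (1 - u.1) ^ (-q) * u.1 ^ (-p) * (u.2 ^ (p - 1) * (1 - u.2) ^ (r - 1)) =
      ∑' n : ℕ, Gamma (q + n) * Gamma r / (Gamma q * Gamma (n + 1 + r)) / (n + 1 - p) := by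
  have hnonneg : ∀ u ∈ triangle,
      0 ≤ (1 - u.1) ^ (-q) * u.1 ^ (-p) * (u.2 ^ (p - 1) * (1 - u.2) ^ (r - 1)) :=
    fun u ⟨h₀, h₁₂, h₂⟩ ↦ mul_nonneg (mul_nonneg (rpow_nonneg (by linarith) _)
      (rpow_nonneg h₀.le _)) (mul_nonneg (rpow_nonneg (by linarith) _)
        (rpow_nonneg (by linarith) _))
  have hterm (n : ℕ) :
      0 ≤ Gamma (q + n) * Gamma r / (Gamma q * Gamma (n + 1 + r)) / (n + 1 - p) := by
    have := Gamma_pos_of_pos hq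
    have := Gamma_pos_of_pos hr
    have := Gamma_pos_of_pos (by positivity : 0 < q + n)
    have := Gamma_pos_of_pos (by positivity : 0 < n + 1 + r)
    have : 0 < (n : ℝ) + 1 - p := by linarith [n.cast_nonneg (α := ℝ)]
    positivity
  rw [integral_eq_lintegral_of_nonneg_ae
      (ae_restrict_of_forall_mem measurableSet_triangle hnonneg) (by fun_prop),
    lintegral_triangle_eq_tsum hp hq hr, ENNReal.tsum_toReal_eq fun _ ↦ ENNReal.ofReal_ne_top]
  exact tsum_congr fun n ↦ ENNReal.toReal_ofReal (hterm n)

lemma integrand_eq_on_triangle (a b c : ℝ) {u : ℝ × ℝ} (hu : u ∈ triangle) :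
    ((1 - u.1) / (1 - u.2)) ^ a * (u.2 / u.1) ^ b * (1 / (1 - u.2)) ^ c / ((1 - u.1) * u.2) =
      (1 - u.1) ^ (-(1 - a)) * u.1 ^ (-b) * (u.2 ^ (b - 1) * (1 - u.2) ^ (1 - a - c - 1)) := by
  obtain ⟨h₀, h₁₂, h₂⟩ := hu
  have h₁ : 0 < 1 - u.1 := by linarith
  have h₂' : 0 < 1 - u.2 := by linarith
  have h₃ : 0 < u.2 := h₀.trans h₁₂
  have := rpow_pos_of_pos h₁ a
  have := rpow_pos_of_pos h₂' a
  have := rpow_pos_of_pos h₂' c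
  have := rpow_pos_of_pos h₀ b
  have := rpow_pos_of_pos h₃ b
  rw [div_rpow h₁.le h₂'.le, div_rpow h₃.le h₀.le, div_rpow zero_le_one h₂'.le, one_rpow,
    neg_sub, rpow_sub h₁, rpow_one, rpow_neg h₀.le, rpow_sub h₃, rpow_one,
    show 1 - a - c - 1 = -a - c by ring, rpow_sub h₂', rpow_neg h₂'.le]
  field_simp

theorem stmt16 (t x y : ℝ) (h1 : |t * x| < 1) (h2 : |x| < 1) (h3 : |x + y| < 1) :
    ∫ u in {u : ℝ × ℝ | 0 < u.1 ∧ u.1 < u.2 ∧ u.2 < 1},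
        ((1 - u.1) / (1 - u.2)) ^ x * (u.2 / u.1) ^ (t * x) * (1 / (1 - u.2)) ^ y /
          ((1 - u.1) * u.2) =
      ∑' l : ℕ+,
        Real.Gamma ((l : ℕ) - x) * Real.Gamma (1 - x - y) /
            (Real.Gamma (1 - x) * Real.Gamma ((l : ℕ) + 1 - x - y)) *
          (1 / ((l : ℕ) - t * x)) := by
  have hp : t * x < 1 := (abs_lt.1 h1).2
  have hq : 0 < 1 - x := by linarith [(abs_lt.1 h2).2]
  have hr : 0 < 1 - x - y := by linarith [(abs_lt.1 h3).2]
  change ∫ u in triangle, _ = _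
  rw [setIntegral_congr_fun measurableSet_triangle fun u ↦ integrand_eq_on_triangle x (t * x) y,
    integral_triangle_eq_tsum hp hq hr, ← Equiv.pnatEquivNat.symm.tsum_eq]
  refine tsum_congr fun n ↦ ?_
  simp only [Equiv.pnatEquivNat_symm_apply, Nat.succPNat_coe, Nat.cast_succ]
  ring_nf
end
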